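/- arXiv:2602.17032 — 3 statements merged into one kernel-verified Lean document; each statement's English description precedes it below -/
import Mathlib

section
/- Reduction correctness (direction 1): Given a Maximum Coverage instance with universe U = {1,…,G}, sets S₁,…,S_J ⊆ U, and budget k, construct the SNR coefficients Γ̄_{n,m}(i) = γ_th if i ∈ S_m and 0 otherwise (for n = 1,…,k, m = 1,…,J), and Γ̄(i;A) = ∑_{n,m} a_{n,m} Γ̄_{n,m}(i). Then for any J' ⊆ {1,…,J} with |J'| = k ≤ J, there exists a one-hot matrix A ∈ {0,1}^{k×J} such that Γ̄(i;A) ≥ γ_th for all i ∈ ⋃_{j∈J'} S_j. Hence the covered-grid count of A is at least |⋃_{j∈J'} S_j|. -/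
open scoped Classical

/-- Reduction from Maximum Coverage, direction 1: with SNR coefficients
`Γ̄_{n,m}(i) = γ_th·1{i ∈ S_m}` and `Γ̄(i;A) = ∑_{n,m} a_{n,m} Γ̄_{n,m}(i)`, any
`k`-subset `J'` of set indices induces a one-hot matrix `A ∈ {0,1}^{k×J}` whose SNR at
every element of `⋃_{j∈J'} S_j` reaches `γ_th`; hence the covered-grid count of `A` is at
least `|⋃_{j∈J'} S_j|`. -/
theorem max_coverage_reduction_forward {U : Type*} [Fintype U]
    (J k : ℕ) (hk : k ≤ J)
    (γth : ℝ) (hγ : 0 < γth)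
    (S : Fin J → Finset U)
    (J' : Finset (Fin J)) (hJ' : J'.card = k) :
    ∃ A : Fin k → Fin J → ℝ,
      (∀ n m, A n m = 0 ∨ A n m = 1) ∧ (∀ n, ∑ m, A n m = 1) ∧
      (∀ i ∈ J'.biUnion S,
        γth ≤ ∑ n, ∑ m, A n m * (if i ∈ S m then γth else 0)) ∧
      (J'.biUnion S).card ≤
        (Finset.univ.filter fun i : U =>
          γth ≤ ∑ n, ∑ m, A n m * (if i ∈ S m then γth else 0)).card := by
  classical
  let e : Fin k ≃ J' := (J'.equivFinOfCardEq hJ').symm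
  refine ⟨fun n m => if m = (e n : Fin J) then 1 else 0, ?_, ?_, ?_, ?_⟩
  · intro n m; by_cases h : m = (e n : Fin J) <;> simp [h]
  · intro n; simp
  · intro i hi
    obtain ⟨j, hjJ', hij⟩ := Finset.mem_biUnion.mp hi
    have key : ∀ n : Fin k,
        ∑ m, (if m = (e n : Fin J) then (1:ℝ) else 0) * (if i ∈ S m then γth else 0)
          = (if i ∈ S (e n : Fin J) then γth else 0) := by
      intro n
      rw [Finset.sum_eq_single (e n : Fin J)]
      · simp
      · intro b _ hb; simp [hb]
      · simp
    simp only [key]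
    set n0 : Fin k := e.symm ⟨j, hjJ'⟩ with hn0
    have hsplit := Finset.sum_eq_single (s := Finset.univ) (f := fun n : Fin k =>
        if i ∈ S (e n : Fin J) then γth else 0) n0
    calc γth = if i ∈ S (e n0 : Fin J) then γth else 0 := by
            simp [hn0, hij]
      _ ≤ ∑ n : Fin k, if i ∈ S (e n : Fin J) then γth else 0 := by
            apply Finset.single_le_sum (f := fun n : Fin k =>
              if i ∈ S (e n : Fin J) then γth else 0)
            · intro n _; positivity
            · exact Finset.mem_univ n0
  · apply Finset.card_le_card
    intro i hi
    simp only [Finset.mem_filter, Finset.mem_univ, true_and]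
    -- reuse the third part: redo the argument
    obtain ⟨j, hjJ', hij⟩ := Finset.mem_biUnion.mp hi
    have key : ∀ n : Fin k,
        ∑ m, (if m = (e n : Fin J) then (1:ℝ) else 0) * (if i ∈ S m then γth else 0)
          = (if i ∈ S (e n : Fin J) then γth else 0) := by
      intro n
      rw [Finset.sum_eq_single (e n : Fin J)]
      · simp
      · intro b _ hb; simp [hb]
      · simp
    simp only [key]
    set n0 : Fin k := e.symm ⟨j, hjJ'⟩ with hn0
    calc γth = if i ∈ S (e n0 : Fin J) then γth else 0 := by
            simp [hn0, hij]
      _ ≤ ∑ n : Fin k, if i ∈ S (e n : Fin J) then γth else 0 := by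
            apply Finset.single_le_sum (f := fun n : Fin k =>
              if i ∈ S (e n : Fin J) then γth else 0)
            · intro n _; positivity
            · exact Finset.mem_univ n0
end

section
/- Reduction correctness (direction 2): With the construction Γ̄_{n,m}(i) = γ_th·1{i ∈ S_m} and Γ̄(i;A) = ∑_{n,m} a_{n,m} Γ̄_{n,m}(i) for a one-hot A ∈ {0,1}^{k×J}, let J(A) = {m : some row of A selects m}. Then for every i ∈ U, Γ̄(i;A) ≥ γ_th implies i ∈ ⋃_{m∈J(A)} S_m. Since |J(A)| ≤ k, the covered-grid count of A is at most max over k-subsets J' ⊆ {1,…,J} of |⋃_{j∈J'} S_j|. -/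
open scoped Classical

/-- Reduction from Maximum Coverage, direction 2: for a one-hot matrix
`A ∈ {0,1}^{k×J}` with selection function `σ`, any element whose SNR
`Γ̄(i;A) = ∑_{n,m} a_{n,m} γ_th·1{i ∈ S_m}` reaches `γ_th` belongs to
`⋃_{m ∈ σ({1,…,k})} S_m`; and since `|σ({1,…,k})| ≤ k ≤ J`, the covered-grid count of
`A` is at most the union size of some `k`-subset of set indices. -/
theorem max_coverage_reduction_backward {U : Type*} [Fintype U]
    (J k : ℕ) (hk : k ≤ J)
    (γth : ℝ) (hγ : 0 < γth)
    (S : Fin J → Finset U)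
    (A : Fin k → Fin J → ℝ) (σ : Fin k → Fin J)
    (hA : ∀ n m, A n m = if m = σ n then (1 : ℝ) else 0) :
    (∀ i : U,
      γth ≤ (∑ n, ∑ m, A n m * (if i ∈ S m then γth else 0)) →
        ∃ n : Fin k, i ∈ S (σ n)) ∧
    ∃ J' : Finset (Fin J), J'.card = k ∧
      (Finset.univ.filter fun i : U =>
          γth ≤ ∑ n, ∑ m, A n m * (if i ∈ S m then γth else 0)).card
        ≤ (J'.biUnion S).card := by
  have hsum : ∀ i : U,
      (∑ n, ∑ m, A n m * (if i ∈ S m then γth else 0))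
        = ∑ n, (if i ∈ S (σ n) then γth else 0) := by
    intro i
    refine Finset.sum_congr rfl fun n _ => ?_
    rw [Finset.sum_eq_single (σ n)]
    · simp [hA]
    · intro m _ hm; simp [hA, hm]
    · simp
  have hmain : ∀ i : U,
      γth ≤ (∑ n, ∑ m, A n m * (if i ∈ S m then γth else 0)) →
        ∃ n : Fin k, i ∈ S (σ n) := by
    intro i hi
    rw [hsum] at hi
    by_contra h
    push_neg at h
    have : (∑ n, (if i ∈ S (σ n) then γth else 0)) = 0 := by
      refine Finset.sum_eq_zero fun n _ => ?_
      simp [h n]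
    rw [this] at hi; linarith
  refine ⟨hmain, ?_⟩
  obtain ⟨J', hsub, hcard⟩ := Finset.exists_superset_card_eq
    (s := Finset.univ.image σ) (n := k)
    ((Finset.card_image_le).trans (by simp))
    (by simpa using hk)
  refine ⟨J', hcard, Finset.card_le_card fun i hi => ?_⟩
  simp only [Finset.mem_filter, Finset.mem_univ, true_and] at hi
  obtain ⟨n, hn⟩ := hmain i hi
  exact Finset.mem_biUnion.2 ⟨σ n, hsub (Finset.mem_image_of_mem σ (Finset.mem_univ n)), hn⟩
end

section
/- Combining both reduction directions: for the constructed instance with coefficients Γ̄_{n,m}(i) = γ_th·1{i ∈ S_m}, the maximum over one-hot A ∈ {0,1}^{k×J} of the covered-grid count |{i ∈ U : Γ̄(i;A) ≥ γ_th}| equals the maximum over subsets J' ⊆ {1,…,J} with |J'| = k of |⋃_{j∈J'} S_j|. -/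
open scoped Classical

/-- Combining both reduction directions: for the constructed instance with coefficients
`Γ̄_{n,m}(i) = γ_th·1{i ∈ S_m}`, the maximum covered-grid count over one-hot matrices
`A ∈ {0,1}^{k×J}` equals the Maximum Coverage optimum
`max_{J' ⊆ {1,…,J}, |J'| = k} |⋃_{j∈J'} S_j|`. -/
theorem max_coverage_reduction_equality {U : Type*} [Fintype U]
    (J k : ℕ) (hk1 : 1 ≤ k) (hk : k ≤ J)
    (γth : ℝ) (hγ : 0 < γth)
    (S : Fin J → Finset U) :
    sSup {v : ℕ | ∃ A : Fin k → Fin J → ℝ,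
        (∀ n m, A n m = 0 ∨ A n m = 1) ∧ (∀ n, ∑ m, A n m = 1) ∧
        v = (Finset.univ.filter fun i : U =>
          γth ≤ ∑ n, ∑ m, A n m * (if i ∈ S m then γth else 0)).card}
      = sSup {v : ℕ | ∃ J' : Finset (Fin J), J'.card = k ∧ v = (J'.biUnion S).card} := by
  set L : Set ℕ := {v : ℕ | ∃ A : Fin k → Fin J → ℝ,
        (∀ n m, A n m = 0 ∨ A n m = 1) ∧ (∀ n, ∑ m, A n m = 1) ∧
        v = (Finset.univ.filter fun i : U =>
          γth ≤ ∑ n, ∑ m, A n m * (if i ∈ S m then γth else 0)).card} with hLdef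
  set R : Set ℕ := {v : ℕ | ∃ J' : Finset (Fin J), J'.card = k ∧ v = (J'.biUnion S).card}
    with hRdef
  have hRbdd : BddAbove R := by
    refine ⟨Fintype.card U, ?_⟩
    rintro v ⟨J', -, rfl⟩
    exact Finset.card_le_univ _
  have hLbdd : BddAbove L := by
    refine ⟨Fintype.card U, ?_⟩
    rintro v ⟨A, -, -, rfl⟩
    exact Finset.card_filter_le _ _
  -- For each J' of card k, there is an A achieving exactly the union's card.
  have hRL : R ⊆ L := by
    rintro v ⟨J', hJ', rfl⟩
    have hkJ : k ≤ Fintype.card (Fin J) := by simpa using hk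
    set c : Fin k → Fin J := fun n => (J'.orderIsoOfFin hJ' n : Fin J) with hc
    have hcmem : ∀ n, c n ∈ J' := fun n => (J'.orderIsoOfFin hJ' n).2
    have hcsurj : ∀ j ∈ J', ∃ n, c n = j := by
      intro j hj
      exact ⟨(J'.orderIsoOfFin hJ').symm ⟨j, hj⟩,
        congrArg Subtype.val ((J'.orderIsoOfFin hJ').apply_symm_apply ⟨j, hj⟩)⟩
    refine ⟨fun n m => if m = c n then 1 else 0, ?_, ?_, ?_⟩
    · intro n m; by_cases h : m = c n <;> simp [h]
    · intro n; simp
    · have hset : (Finset.univ.filter fun i : U =>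
          γth ≤ ∑ n, ∑ m, (if m = c n then (1:ℝ) else 0) * (if i ∈ S m then γth else 0))
            = J'.biUnion S := by
        ext i
        simp only [Finset.mem_filter, Finset.mem_univ, true_and, Finset.mem_biUnion]
        have hsum : ∀ n : Fin k,
          (∑ m, (if m = c n then (1:ℝ) else 0) * (if i ∈ S m then γth else 0))
            = (if i ∈ S (c n) then γth else 0) := by
          intro n
          rw [Finset.sum_eq_single (c n)]
          · simp
          · intro b _ hb; simp [hb]
          · simp
        rw [show (∑ n, ∑ m, (if m = c n then (1:ℝ) else 0) * (if i ∈ S m then γth else 0))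
              = ∑ n, (if i ∈ S (c n) then γth else 0) from
            Finset.sum_congr rfl fun n _ => hsum n]
        constructor
        · intro h
          by_contra hcon
          push_neg at hcon
          have hz : (∑ n, (if i ∈ S (c n) then γth else 0)) = 0 := by
            refine Finset.sum_eq_zero fun n _ => ?_
            have : i ∉ S (c n) := fun hi => hcon (c n) (hcmem n) hi
            simp [this]
          rw [hz] at h
          exact absurd h (not_le.mpr hγ)
        · rintro ⟨j, hj, hij⟩
          obtain ⟨n, rfl⟩ := hcsurj j hj
          calc γth = (if i ∈ S (c n) then γth else 0) := by simp [hij]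
            _ ≤ ∑ n', (if i ∈ S (c n') then γth else 0) := by
                refine Finset.single_le_sum (f := fun n' => if i ∈ S (c n') then γth else 0)
                  (fun m _ => ?_) (Finset.mem_univ n)
                split
                · exact le_of_lt hγ
                · exact le_refl 0
      simpa using congrArg Finset.card hset.symm
  -- Every value in L is at most some value in R.
  have hLleR : ∀ v ∈ L, v ≤ sSup R := by
    rintro v ⟨A, hA01, hArow, rfl⟩
    -- pick for each row n a column f n with A n (f n) = 1
    have hApos : ∀ n m, 0 ≤ A n m := by
      intro n m; rcases hA01 n m with h | h <;> simp [h]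
    have hex : ∀ n : Fin k, ∃ m, A n m = 1 := by
      intro n
      by_contra hcon
      push_neg at hcon
      have hz : ∀ m, A n m = 0 := fun m => (hA01 n m).resolve_right (hcon m)
      have h1 := hArow n
      rw [Finset.sum_eq_zero fun m _ => hz m] at h1
      norm_num at h1
    choose f hf using hex
    -- uniqueness of the 1 in each row
    have huniq : ∀ n m, A n m = 1 → m = f n := by
      intro n m hm
      by_contra hne
      have h1 : A n (f n) ≤ ∑ m' ∈ Finset.univ.erase m, A n m' :=
        Finset.single_le_sum (fun x _ => hApos n x)
          (Finset.mem_erase.mpr ⟨fun h => hne h.symm, Finset.mem_univ _⟩)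
      have h2 : (∑ m', A n m') = A n m + ∑ m' ∈ Finset.univ.erase m, A n m' :=
        (Finset.add_sum_erase _ _ (Finset.mem_univ m)).symm
      rw [hArow n, hm, hf n] at *
      linarith
    have hMcard : (Finset.univ.image f).card ≤ k := by
      simpa using Finset.card_image_le (s := (Finset.univ : Finset (Fin k))) (f := f)
    obtain ⟨J', hsub, hJ'⟩ := Finset.exists_superset_card_eq hMcard (by simpa using hk)
    have hcov : (Finset.univ.filter fun i : U =>
          γth ≤ ∑ n, ∑ m, A n m * (if i ∈ S m then γth else 0)) ⊆ J'.biUnion S := by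
      intro i hi
      simp only [Finset.mem_filter, Finset.mem_univ, true_and] at hi
      by_contra hcon
      simp only [Finset.mem_biUnion, not_exists, not_and] at hcon
      have hnot : ∀ n, i ∉ S (f n) := by
        intro n
        exact hcon (f n) (hsub (Finset.mem_image_of_mem f (Finset.mem_univ n)))
      have hzero : (∑ n, ∑ m, A n m * (if i ∈ S m then γth else 0)) = 0 := by
        refine Finset.sum_eq_zero fun n _ => Finset.sum_eq_zero fun m _ => ?_
        rcases hA01 n m with h | h
        · simp [h]
        · have : m = f n := huniq n m h
          subst this
          simp [hnot n]
      rw [hzero] at hi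
      exact absurd hi (not_le.mpr hγ)
    calc (Finset.univ.filter fun i : U =>
          γth ≤ ∑ n, ∑ m, A n m * (if i ∈ S m then γth else 0)).card
          ≤ (J'.biUnion S).card := Finset.card_le_card hcov
      _ ≤ sSup R := le_csSup hRbdd ⟨J', hJ', rfl⟩
  have hRne : R.Nonempty := by
    obtain ⟨t, -, ht⟩ := Finset.exists_subset_card_eq
      (s := (Finset.univ : Finset (Fin J))) (n := k) (by simpa using hk)
    exact ⟨_, t, ht, rfl⟩
  obtain ⟨w, hw⟩ := hRne
  apply le_antisymm
  · exact csSup_le ⟨w, hRL hw⟩ hLleR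
  · exact csSup_le ⟨w, hw⟩ fun v hv => le_csSup hLbdd (hRL hv)
end
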